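/- No Thomas-Walls graph T_n is properly 3-colorable. More precisely, if T_1 = K_4 is not 3-colorable and T_{n+1} is obtained from T_n by deleting an edge uv and adding vertices x, y, z with edges ux, xy, xz, vy, vz, yz, then in any proper 3-coloring of T_{n+1} the vertices u and v receive the same color whenever x,y,z,u,v induce this gadget with ψ(u) determined; conclude by induction that T_{n+1} is not 3-colorable. -/

import Mathlib

/-!
In the gadget, `x` and `v` are both adjacent to the two ends of the edge `yz`, so a 3-coloring
gives them the same color, and `u`, adjacent to `x`, gets a color different from `v`. Hence a
proper 3-coloring of `Tₙ₊₁` restricts to one of `Tₙ`, even though the edge `uv` was deleted,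
and induction ends at `K₄`.
-/

/-- `(V, E)` is a concrete copy of `K₄`: four distinct vertices and all six edges. -/
def IsK4 (V : Finset ℕ) (E : Finset (Sym2 ℕ)) : Prop :=
  ∃ a b c d : ℕ, a ≠ b ∧ a ≠ c ∧ a ≠ d ∧ b ≠ c ∧ b ≠ d ∧ c ≠ d ∧
    V = {a, b, c, d} ∧
    E = {s(a, b), s(a, c), s(a, d), s(b, c), s(b, d), s(c, d)}

/-- `(V', E')` is obtained from `(V, E)` by the Thomas–Walls step: delete an edge `uv`
lying in two triangles, and add new vertices `x, y, z` and edges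
`ux, xy, xz, vy, vz, yz`. -/
def TWStep (V : Finset ℕ) (E : Finset (Sym2 ℕ)) (V' : Finset ℕ) (E' : Finset (Sym2 ℕ)) : Prop :=
  (∀ e ∈ E, ∀ w : ℕ, w ∈ e → w ∈ V) ∧
  ∃ u v x y z : ℕ, u ∈ V ∧ v ∈ V ∧ u ≠ v ∧ s(u, v) ∈ E ∧
    (∃ p q : ℕ, p ≠ q ∧ s(u, p) ∈ E ∧ s(v, p) ∈ E ∧ s(u, q) ∈ E ∧ s(v, q) ∈ E) ∧
    x ∉ V ∧ y ∉ V ∧ z ∉ V ∧ x ≠ y ∧ x ≠ z ∧ y ≠ z ∧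
    V' = V ∪ {x, y, z} ∧
    E' = (E \ {s(u, v)}) ∪ {s(u, x), s(x, y), s(x, z), s(v, y), s(v, z), s(y, z)}

/-- `(V, E)` is (a concrete copy of) the Thomas–Walls graph `Tₙ`. -/
inductive IsThomasWalls : ℕ → Finset ℕ → Finset (Sym2 ℕ) → Prop
  | base (V : Finset ℕ) (E : Finset (Sym2 ℕ)) : IsK4 V E → IsThomasWalls 1 V E
  | step (n : ℕ) (V E V' E') : IsThomasWalls n V E → TWStep V E V' E' →
      IsThomasWalls (n + 1) V' E'

/-- Loops `s(a, a)` in `E` impose no constraint. -/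
def IsProperColoring {α β : Type*} (E : Finset (Sym2 α)) (c : α → β) : Prop :=
  ∀ a b : α, s(a, b) ∈ E → a ≠ b → c a ≠ c b

theorem Fin.three_eq_of_ne_of_ne {a b c d : Fin 3} (hab : a ≠ b) (hac : a ≠ c) (hbc : b ≠ c)
    (hdb : d ≠ b) (hdc : d ≠ c) : d = a := by
  omega

theorem isK4_not_isProperColoring {V : Finset ℕ} {E : Finset (Sym2 ℕ)} (hK4 : IsK4 V E)
    (c : ℕ → Fin 3) : ¬ IsProperColoring E c := by
  obtain ⟨a, b, d, e, hab, had, hae, hbd, hbe, hde, -, rfl⟩ := hK4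
  intro hc
  have hea : c e = c a :=
    Fin.three_eq_of_ne_of_ne (hc a b (by simp) hab) (hc a d (by simp) had)
      (hc b d (by simp) hbd) (hc b e (by simp) hbe).symm (hc d e (by simp) hde).symm
  exact hc a e (by simp) hae hea.symm

theorem gadget_color_ne {α : Type*} {c : α → Fin 3} {u v x y z : α} (hux : c u ≠ c x)
    (hxy : c x ≠ c y) (hxz : c x ≠ c z) (hvy : c v ≠ c y) (hvz : c v ≠ c z)
    (hyz : c y ≠ c z) : c u ≠ c v :=
  Fin.three_eq_of_ne_of_ne hvy hvz hyz hxy hxz ▸ hux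

theorem TWStep.isProperColoring {V V' : Finset ℕ} {E E' : Finset (Sym2 ℕ)}
    (hstep : TWStep V E V' E') {c : ℕ → Fin 3} (hc : IsProperColoring E' c) :
    IsProperColoring E c := by
  obtain ⟨-, u, v, x, y, z, hu, hv, -, -, -, hx, hy, hz, hxy, hxz, hyz, -, rfl⟩ := hstep
  have hVne {a b : ℕ} (ha : a ∈ V) (hb : b ∉ V) : a ≠ b := fun h => hb (h ▸ ha)
  have hcuv : c u ≠ c v :=
    gadget_color_ne (hc u x (by simp) (hVne hu hx)) (hc x y (by simp) hxy)
      (hc x z (by simp) hxz) (hc v y (by simp) (hVne hv hy)) (hc v z (by simp) (hVne hv hz))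
      (hc y z (by simp) hyz)
  intro a b hab hne
  by_cases huv : s(a, b) = s(u, v)
  · rcases Sym2.eq_iff.mp huv with ⟨rfl, rfl⟩ | ⟨rfl, rfl⟩
    · exact hcuv
    · exact hcuv.symm
  · exact hc a b (by simp [hab, huv]) hne

/-- No Thomas–Walls graph `Tₙ` is properly 3-colorable. -/
theorem thomasWalls_not_3_colorable (n : ℕ) (V : Finset ℕ) (E : Finset (Sym2 ℕ))
    (h : IsThomasWalls n V E) :
    ¬ ∃ c : ℕ → Fin 3, ∀ a b : ℕ, s(a, b) ∈ E → a ≠ b → c a ≠ c b := by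
  rintro ⟨c, hc⟩
  change IsProperColoring E c at hc
  induction h with
  | base V E hK4 => exact isK4_not_isProperColoring hK4 c hc
  | step n V E V' E' _ hstep ih => exact ih (hstep.isProperColoring hc)
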